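/- arXiv:2211.08955 — 7 statements merged into one kernel-verified Lean document; each statement's English description precedes it below -/
import Mathlib

section
/- Let m ≥ 1 and n ∈ ℕ. There exists a nonzero bihomogeneous A ∈ S of bidegree (m,n) with δ(A) = 0 if and only if n ≥ m. -/
open MvPolynomial

noncomputable section

/-- The polynomial ring `ℂ[Y₀,…,Y_N,X₀,…,X_N]`: the left copy of `Fin (N+1)` indexes the
`Y`-variables, the right copy indexes the `X`-variables. -/
abbrev S (N : ℕ) : Type := MvPolynomial (Fin (N + 1) ⊕ Fin (N + 1)) ℂ

/-- Weight giving `1` to each `Yᵢ` and `0` to each `Xᵢ`. -/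
def wY (N : ℕ) : (Fin (N + 1) ⊕ Fin (N + 1)) → ℕ := Sum.elim (fun _ => 1) (fun _ => 0)

/-- Weight giving `0` to each `Yᵢ` and `1` to each `Xᵢ`. -/
def wX (N : ℕ) : (Fin (N + 1) ⊕ Fin (N + 1)) → ℕ := Sum.elim (fun _ => 0) (fun _ => 1)

/-- `A` is bihomogeneous of bidegree `(m, n)`. -/
def Bihom (N m n : ℕ) (A : S N) : Prop :=
  A.IsWeightedHomogeneous (wY N) m ∧ A.IsWeightedHomogeneous (wX N) n

/-- The operator `δ(A) = ∑ᵢ Xᵢ · ∂A/∂Yᵢ`. -/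
def deltaOp (N : ℕ) (A : S N) : S N :=
  ∑ i : Fin (N + 1), X (Sum.inr i) * pderiv (Sum.inl i) A

/-- The quadratic polynomial `q = ∑ᵢ Xᵢ·Yᵢ`. -/
def qPoly (N : ℕ) : S N := ∑ i : Fin (N + 1), X (Sum.inr i) * X (Sum.inl i)

/-!
The derivations `δ = ∑ Xᵢ ∂/∂Yᵢ` and `ε = ∑ Yᵢ ∂/∂Xᵢ` have commutator `h = E_X - E_Y`
(difference of the Euler derivations), which acts on bidegree `(p, q)` as `q - p`, and `(h, δ, ε)`
is an `sl₂`-triple. A nonzero `A ∈ ker δ` of bidegree `(m, n)` is thus a primitive vector of weight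
`n - m`. Since `ε` lowers the `X`-degree, `ε^(n+1) A = 0`, and the `sl₂` relation
`δ ε^(k+1) A = (k+1)(n-m-k) ε^k A` then forces `n - m ∈ ℕ`. Conversely
`(Y₀X₁ - Y₁X₀)^m X₀^(n-m)` is a nonzero element of `ker δ` of bidegree `(m, n)`.
-/

lemma Derivation.sum_apply {ι R A M : Type*} [CommSemiring R] [CommSemiring A] [Algebra R A]
    [AddCommMonoid M] [Module A M] [Module R M] (s : Finset ι) (D : ι → Derivation R A M) (a : A) :
    (∑ i ∈ s, D i) a = ∑ i ∈ s, D i a := by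
  rw [← Derivation.coeFnAddMonoidHom_apply, map_sum, Finset.sum_apply]
  rfl

lemma IsSl2Triple.HasPrimitiveVectorWith.exists_nat_of_pow_toEnd_f_eq_zero
    {R L M : Type*} [CommRing R] [IsDomain R] [CharZero R] [LieRing L] [LieAlgebra R L]
    [AddCommGroup M] [Module R M] [Module.IsTorsionFree R M] [LieRingModule L M] [LieModule R L M]
    {h e f : L} {t : IsSl2Triple h e f} {m : M} {μ : R} (P : t.HasPrimitiveVectorWith m μ)
    {n : ℕ} (hn : (LieModule.toEnd R L M f ^ n) m = 0) : ∃ k : ℕ, μ = k := by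
  obtain ⟨k, hk, hk'⟩ := Nat.exists_not_and_succ_of_not_zero_of_exists
    (p := fun k => (LieModule.toEnd R L M f ^ k) m = 0) (by simpa using P.ne_zero) ⟨n, hn⟩
  refine ⟨k, ?_⟩
  have := P.lie_e_pow_succ_toEnd_f k
  rw [hk', lie_zero, eq_comm, smul_eq_zero_iff_left hk, mul_eq_zero, sub_eq_zero] at this
  exact this.resolve_left (Nat.cast_add_one_ne_zero k)

namespace MvPolynomial

section Euler

variable {σ R : Type*} [Fintype σ] [CommSemiring R]

def eulerDer (w : σ → ℕ) : Derivation R (MvPolynomial σ R) (MvPolynomial σ R) :=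
  ∑ i, w i • (X i : MvPolynomial σ R) • pderiv i

@[simp]
lemma eulerDer_X (w : σ → ℕ) (i : σ) : eulerDer w (X i : MvPolynomial σ R) = w i • X i := by
  classical
  simp [eulerDer, Derivation.sum_apply, pderiv_X, Pi.single_apply]

lemma IsWeightedHomogeneous.eulerDer_eq {w : σ → ℕ} {n : ℕ} {φ : MvPolynomial σ R}
    (h : φ.IsWeightedHomogeneous w n) : eulerDer w φ = n • φ := by
  simpa [eulerDer, Derivation.sum_apply] using h.sum_weight_X_mul_pderiv

end Euler

lemma IsWeightedHomogeneous.pderiv_eq_zero_of_lt {σ R : Type*} [CommSemiring R]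
    {w : σ → ℕ} {n : ℕ} {φ : MvPolynomial σ R} (h : φ.IsWeightedHomogeneous w n) {i : σ}
    (hi : n < w i) : pderiv i φ = 0 := by
  classical
  ext d
  have hd : Finsupp.weight w (d + Finsupp.single i 1) ≠ n := by
    rw [map_add, Finsupp.weight_single, one_smul]
    omega
  rw [coeff_pderiv, coeff_zero, h.coeff_eq_zero _ hd, zero_mul]

section Polarization

variable {ι R : Type*} [Fintype ι] [CommRing R]

def deltaDer : Derivation R (MvPolynomial (ι ⊕ ι) R) (MvPolynomial (ι ⊕ ι) R) :=
  ∑ i, (X (Sum.inr i) : MvPolynomial (ι ⊕ ι) R) • pderiv (Sum.inl i)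

def epsDer : Derivation R (MvPolynomial (ι ⊕ ι) R) (MvPolynomial (ι ⊕ ι) R) :=
  ∑ i, (X (Sum.inl i) : MvPolynomial (ι ⊕ ι) R) • pderiv (Sum.inr i)

lemma deltaDer_apply (A : MvPolynomial (ι ⊕ ι) R) :
    deltaDer A = ∑ i, X (Sum.inr i) * pderiv (Sum.inl i) A := by
  simp [deltaDer, Derivation.sum_apply]

@[simp] lemma deltaDer_X_inl (i : ι) :
    deltaDer (X (Sum.inl i) : MvPolynomial (ι ⊕ ι) R) = X (Sum.inr i) := by
  classical
  simp [deltaDer_apply, pderiv_X, Pi.single_apply]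

@[simp] lemma deltaDer_X_inr (i : ι) :
    deltaDer (X (Sum.inr i) : MvPolynomial (ι ⊕ ι) R) = 0 := by
  simp [deltaDer_apply, pderiv_X_of_ne]

@[simp] lemma epsDer_X_inl (i : ι) :
    epsDer (X (Sum.inl i) : MvPolynomial (ι ⊕ ι) R) = 0 := by
  simp [epsDer, Derivation.sum_apply, pderiv_X_of_ne]

@[simp] lemma epsDer_X_inr (i : ι) :
    epsDer (X (Sum.inr i) : MvPolynomial (ι ⊕ ι) R) = X (Sum.inl i) := by
  classical
  simp [epsDer, Derivation.sum_apply, pderiv_X, Pi.single_apply]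

lemma lie_deltaDer_epsDer :
    ⁅deltaDer (ι := ι) (R := R), epsDer (ι := ι) (R := R)⁆ =
      eulerDer (Sum.elim 0 1) - eulerDer (Sum.elim 1 0) := by
  refine derivation_ext fun v => ?_
  cases v <;> simp [Derivation.commutator_apply]

lemma isSl2Triple_deltaDer_epsDer [Nonempty ι] [Nontrivial R] :
    IsSl2Triple ⁅deltaDer (ι := ι) (R := R), epsDer (ι := ι) (R := R)⁆ deltaDer epsDer where
  h_ne_zero h := by
    have := congr($h (X (Sum.inr (Classical.arbitrary ι))))
    simp [lie_deltaDer_epsDer, X_ne_zero] at this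
  lie_e_f := rfl
  lie_h_e_nsmul := by
    refine derivation_ext fun v => ?_
    cases v <;> simp [lie_deltaDer_epsDer, Derivation.commutator_apply, two_nsmul]
  lie_h_f_nsmul := by
    refine derivation_ext fun v => ?_
    cases v <;> simp [lie_deltaDer_epsDer, Derivation.commutator_apply, two_nsmul, sub_eq_add_neg]

lemma lie_deltaDer_epsDer_apply {A : MvPolynomial (ι ⊕ ι) R} {p q : ℕ}
    (hY : A.IsWeightedHomogeneous (Sum.elim 1 0) p)
    (hX : A.IsWeightedHomogeneous (Sum.elim 0 1) q) :
    ⁅deltaDer (ι := ι) (R := R), epsDer (ι := ι) (R := R)⁆ A = ((q : R) - p) • A := by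
  rw [lie_deltaDer_epsDer, Derivation.sub_apply, hX.eulerDer_eq, hY.eulerDer_eq, sub_smul,
    Nat.cast_smul_eq_nsmul, Nat.cast_smul_eq_nsmul]

lemma isWeightedHomogeneous_epsDer {A : MvPolynomial (ι ⊕ ι) R} {q : ℕ}
    (h : A.IsWeightedHomogeneous (Sum.elim 0 1) (q + 1)) :
    (epsDer A).IsWeightedHomogeneous (Sum.elim 0 1) q := by
  rw [epsDer, Derivation.sum_apply]
  refine IsWeightedHomogeneous.sum _ _ _ fun i _ => ?_
  simpa using (isWeightedHomogeneous_X R _ (Sum.inl i)).mul (h.pderiv (i := Sum.inr i) rfl)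

lemma epsDer_eq_zero_of_isWeightedHomogeneous_zero {A : MvPolynomial (ι ⊕ ι) R}
    (h : A.IsWeightedHomogeneous (Sum.elim 0 1) 0) : epsDer A = 0 := by
  rw [epsDer, Derivation.sum_apply]
  refine Finset.sum_eq_zero fun i _ => ?_
  rw [Derivation.smul_apply, h.pderiv_eq_zero_of_lt (i := Sum.inr i) (by simp), smul_zero]

lemma toEnd_epsDer_pow_eq_zero {A : MvPolynomial (ι ⊕ ι) R} {q : ℕ}
    (h : A.IsWeightedHomogeneous (Sum.elim 0 1) q) :
    (LieModule.toEnd R _ _ (epsDer (ι := ι) (R := R)) ^ (q + 1)) A = 0 := by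
  induction q generalizing A with
  | zero => simpa using epsDer_eq_zero_of_isWeightedHomogeneous_zero h
  | succ q ih =>
    rw [pow_succ, Module.End.mul_apply]
    simpa using ih (isWeightedHomogeneous_epsDer h)

def yxMinor (i j : ι) : MvPolynomial (ι ⊕ ι) R :=
  X (Sum.inl i) * X (Sum.inr j) - X (Sum.inl j) * X (Sum.inr i)

@[simp] lemma deltaDer_yxMinor (i j : ι) : deltaDer (yxMinor (R := R) i j) = 0 := by
  simp [yxMinor, mul_comm]

omit [Fintype ι] in
lemma isWeightedHomogeneous_yxMinor (a b : ℕ) (i j : ι) :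
    (yxMinor (R := R) i j).IsWeightedHomogeneous (Sum.elim (fun _ => a) (fun _ => b)) (a + b) :=
  ((isWeightedHomogeneous_X R _ _).mul (isWeightedHomogeneous_X R _ _)).sub
    ((isWeightedHomogeneous_X R _ _).mul (isWeightedHomogeneous_X R _ _))

omit [Fintype ι] in
lemma yxMinor_ne_zero [Nontrivial R] {i j : ι} (hij : i ≠ j) : yxMinor (R := R) i j ≠ 0 := by
  classical
  intro h
  have := congr(eval (Sum.elim (Pi.single i 1) (Pi.single j 1)) $h)
  simp [yxMinor, hij, hij.symm] at this

end Polarization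

end MvPolynomial

theorem statement3_general (N : ℕ) (hN : 2 ≤ N) (m n : ℕ) :
    (∃ A : S N, A ≠ 0 ∧ Bihom N m n A ∧ deltaOp N A = 0) ↔ m ≤ n := by
  constructor
  · rintro ⟨A, hA, ⟨hY, hX⟩, hδ⟩
    -- `wY N` and `wX N` unfold to the weights `Sum.elim 1 0` and `Sum.elim 0 1` used above.
    have P : (isSl2Triple_deltaDer_epsDer (ι := Fin (N + 1)) (R := ℂ)).HasPrimitiveVectorWith A
        ((n : ℂ) - m) :=
      { ne_zero := hA
        lie_h := lie_deltaDer_epsDer_apply hY hX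
        lie_e := (deltaDer_apply A).trans hδ }
    obtain ⟨k, hk⟩ := P.exists_nat_of_pow_toEnd_f_eq_zero (toEnd_epsDer_pow_eq_zero hX)
    have hnk : n = m + k := by exact_mod_cast sub_eq_iff_eq_add'.mp hk
    omega
  · intro hmn
    have h01 : (0 : Fin (N + 1)) ≠ 1 := Fin.ne_of_val_ne (by simp; omega)
    have hX₀ (w : Fin (N + 1) ⊕ Fin (N + 1) → ℕ) :=
      (isWeightedHomogeneous_X ℂ w (Sum.inr 0)).pow (n - m)
    refine ⟨yxMinor 0 1 ^ m * X (Sum.inr 0) ^ (n - m), ?_, ⟨?_, ?_⟩, ?_⟩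
    · exact mul_ne_zero (pow_ne_zero _ (yxMinor_ne_zero h01)) (pow_ne_zero _ (X_ne_zero _))
    · have hD : (yxMinor 0 1 : S N).IsWeightedHomogeneous (wY N) 1 :=
        isWeightedHomogeneous_yxMinor 1 0 0 1
      simpa [wY] using (hD.pow m).mul (hX₀ (wY N))
    · have hD : (yxMinor 0 1 : S N).IsWeightedHomogeneous (wX N) 1 :=
        isWeightedHomogeneous_yxMinor 0 1 0 1
      simpa [wX, hmn] using (hD.pow m).mul (hX₀ (wX N))
    · rw [deltaOp, ← deltaDer_apply]
      simp [Derivation.leibniz, Derivation.leibniz_pow]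

/-- For `m ≥ 1`, there exists a nonzero bihomogeneous `A` of bidegree `(m, n)`
with `δ(A) = 0` iff `n ≥ m`. -/
theorem statement3 (N : ℕ) (hN : 2 ≤ N) (m n : ℕ) (hm : 1 ≤ m) :
    (∃ A : S N, A ≠ 0 ∧ Bihom N m n A ∧ deltaOp N A = 0) ↔ m ≤ n :=
  statement3_general N hN m n
end
end

section
/- Let m, n ∈ ℕ with 0 ≤ n < m. If A ∈ S is bihomogeneous of bidegree (m,n) and δ(A) = 0, then A = 0. -/
open MvPolynomial

noncomputable section

/-!
The operators `δ = ∑ Xᵢ ∂/∂Yᵢ`, `F = ∑ Yᵢ ∂/∂Xᵢ` and `H = E_X - E_Y` (a difference of Euler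
operators) form an `sl₂`-triple `(H, δ, F)` in `End(S)`: every bracket reduces to
`[X_a ∂_b, X_c ∂_d] = [b = c] X_a ∂_d - [d = a] X_c ∂_b`. By Euler's identity, a nonzero `A` of
bidegree `(m, n)` with `δ A = 0` is a primitive vector of `H`-weight `n - m`. As `F` lowers the
`X`-degree, `F^(n+1) A = 0`, and then `δ F^(j+1) A = (j+1)(n - m - j) F^j A` forces `n - m` to be a
natural number, contradicting `n < m`.
-/

attribute [local instance] LieRing.ofAssociativeRing

namespace MvPolynomial

variable {σ R : Type*}

lemma pderiv_comm [CommRing R] (i j : σ) (p : MvPolynomial σ R) :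
    pderiv i (pderiv j p) = pderiv j (pderiv i p) := by
  classical
  have : ⁅pderiv (R := R) i, pderiv (R := R) j⁆ = 0 := by
    refine derivation_ext fun k => ?_
    rw [Derivation.commutator_apply]
    simp only [pderiv_X, Pi.single_apply]
    split_ifs <;> simp
  rw [← sub_eq_zero, ← Derivation.commutator_apply, this, Derivation.zero_apply]

lemma IsWeightedHomogeneous.pderiv_eq_zero [CommSemiring R] {w : σ → ℕ} {d : ℕ}
    {p : MvPolynomial σ R} (hp : p.IsWeightedHomogeneous w d) {i : σ} (hi : d < w i) :
    pderiv i p = 0 := by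
  ext μ
  rw [coeff_pderiv, coeff_zero]
  by_contra hne
  have := hp (left_ne_zero_of_mul hne)
  rw [map_add, Finsupp.weight_single, one_smul] at this
  omega

variable (R) in
def xMulPDeriv [CommRing R] (a b : σ) : Module.End R (MvPolynomial σ R) :=
  LinearMap.mulLeft R (X a) ∘ₗ (pderiv b).toLinearMap

@[simp] lemma xMulPDeriv_apply [CommRing R] (a b : σ) (p : MvPolynomial σ R) :
    xMulPDeriv R a b p = X a * pderiv b p := rfl

lemma lie_xMulPDeriv [CommRing R] [DecidableEq σ] (a b c d : σ) :
    ⁅xMulPDeriv R a b, xMulPDeriv R c d⁆ =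
      (if b = c then xMulPDeriv R a d else 0) - (if d = a then xMulPDeriv R c b else 0) := by
  refine LinearMap.ext fun p => ?_
  rw [LieRing.of_associative_ring_bracket]
  simp only [LinearMap.sub_apply, Module.End.mul_apply, xMulPDeriv_apply, pderiv_mul, pderiv_X,
    pderiv_comm b d]
  split_ifs <;> simp [*] <;> ring

section Polarization

variable (σ R) [Fintype σ] [CommRing R]

def polarizationE : Module.End R (MvPolynomial (σ ⊕ σ) R) :=
  ∑ i, xMulPDeriv R (Sum.inr i) (Sum.inl i)

def polarizationF : Module.End R (MvPolynomial (σ ⊕ σ) R) :=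
  ∑ i, xMulPDeriv R (Sum.inl i) (Sum.inr i)

def polarizationH : Module.End R (MvPolynomial (σ ⊕ σ) R) :=
  ∑ i, (xMulPDeriv R (Sum.inr i) (Sum.inr i) - xMulPDeriv R (Sum.inl i) (Sum.inl i))

theorem isSl2Triple_polarization [Nonempty σ] [Nontrivial R] :
    IsSl2Triple (polarizationH σ R) (polarizationE σ R) (polarizationF σ R) := by
  classical
  refine ⟨fun h => ?_, ?_, ?_, ?_⟩
  · obtain ⟨i⟩ := ‹Nonempty σ›
    have := congr($h (X (Sum.inr i)))
    simp [polarizationH, pderiv_X, Pi.single_apply] at this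
  · simp [polarizationE, polarizationF, polarizationH, lie_sum, sum_lie, lie_xMulPDeriv]
  · simp [polarizationE, polarizationH, lie_sum, sum_lie, lie_xMulPDeriv, sub_lie, two_mul,
      Finset.sum_add_distrib]
  · simp [polarizationF, polarizationH, lie_sum, sum_lie, lie_xMulPDeriv, sub_lie, two_mul]
    abel

variable {σ R}

lemma polarizationH_apply_of_isWeightedHomogeneous {m n : ℕ} {p : MvPolynomial (σ ⊕ σ) R}
    (hY : p.IsWeightedHomogeneous (Sum.elim (fun _ => 1) (fun _ => 0)) m)
    (hX : p.IsWeightedHomogeneous (Sum.elim (fun _ => 0) (fun _ => 1)) n) :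
    polarizationH σ R p = ((n : R) - m) • p := by
  have eulerY := hY.sum_weight_X_mul_pderiv
  have eulerX := hX.sum_weight_X_mul_pderiv
  simp only [Fintype.sum_sum_type, Sum.elim_inl, Sum.elim_inr, one_smul, zero_smul,
    Finset.sum_const_zero, add_zero, zero_add] at eulerY eulerX
  simp only [polarizationH, LinearMap.sum_apply, LinearMap.sub_apply, xMulPDeriv_apply,
    Finset.sum_sub_distrib, eulerX, eulerY, sub_smul, Nat.cast_smul_eq_nsmul]

lemma IsWeightedHomogeneous.polarizationF {n : ℕ} {p : MvPolynomial (σ ⊕ σ) R}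
    (hX : p.IsWeightedHomogeneous (Sum.elim (fun _ => 0) (fun _ => 1)) (n + 1)) :
    (polarizationF σ R p).IsWeightedHomogeneous (Sum.elim (fun _ => 0) (fun _ => 1)) n := by
  rw [MvPolynomial.polarizationF, LinearMap.sum_apply, ← mem_weightedHomogeneousSubmodule]
  refine Submodule.sum_mem _ fun i _ => ?_
  simpa using (isWeightedHomogeneous_X R _ (Sum.inl i)).mul (hX.pderiv (i := Sum.inr i) rfl)

lemma polarizationF_pow_eq_zero {n : ℕ} {p : MvPolynomial (σ ⊕ σ) R}
    (hX : p.IsWeightedHomogeneous (Sum.elim (fun _ => 0) (fun _ => 1)) n) :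
    (polarizationF σ R ^ (n + 1)) p = 0 := by
  induction n generalizing p with
  | zero =>
    rw [zero_add, pow_one, polarizationF, LinearMap.sum_apply]
    refine Finset.sum_eq_zero fun i _ => ?_
    simp [hX.pderiv_eq_zero (i := Sum.inr i) Nat.zero_lt_one]
  | succ n ih => rw [pow_succ, Module.End.mul_apply, ih hX.polarizationF]

end Polarization

end MvPolynomial

namespace IsSl2Triple.HasPrimitiveVectorWith

variable {R L M : Type*} [CommRing R] [LieRing L] [LieAlgebra R L] [AddCommGroup M] [Module R M]
  [LieRingModule L M] [LieModule R L M] {h e f : L} {t : IsSl2Triple h e f} {m : M} {μ : R}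

/-- The first half of `exists_nat`, whose Noetherianity assumption only serves to make some
`f ^ k` kill `m`. -/
lemma exists_nat_of_pow_toEnd_f_eq_zero_s6 [IsDomain R] [CharZero R] [Module.IsTorsionFree R M]
    (P : t.HasPrimitiveVectorWith m μ) {k : ℕ} (hk : (LieModule.toEnd R L M f ^ k) m = 0) :
    ∃ n : ℕ, μ = n := by
  obtain ⟨n, hn, hn₁⟩ := Nat.exists_not_and_succ_of_not_zero_of_exists
    (p := fun i => (LieModule.toEnd R L M f ^ i) m = 0) P.ne_zero ⟨k, hk⟩
  refine ⟨n, ?_⟩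
  have := P.lie_e_pow_succ_toEnd_f n
  rw [hn₁, lie_zero, eq_comm, smul_eq_zero_iff_left hn, mul_eq_zero, sub_eq_zero] at this
  exact this.resolve_left n.cast_add_one_ne_zero

end IsSl2Triple.HasPrimitiveVectorWith

lemma deltaOp_eq_polarizationE (N : ℕ) (A : S N) :
    deltaOp N A = polarizationE (Fin (N + 1)) ℂ A := by
  simp [deltaOp, polarizationE, LinearMap.sum_apply]

theorem statement6_general (N : ℕ) (m n : ℕ) (hnm : n < m)
    (A : S N) (hA : Bihom N m n A) (hdel : deltaOp N A = 0) :
    A = 0 := by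
  by_contra hA0
  have hprim : (isSl2Triple_polarization (Fin (N + 1)) ℂ).HasPrimitiveVectorWith A
      ((n : ℂ) - m) :=
    ⟨hA0, polarizationH_apply_of_isWeightedHomogeneous hA.1 hA.2,
      by rwa [deltaOp_eq_polarizationE] at hdel⟩
  obtain ⟨k, hk⟩ := hprim.exists_nat_of_pow_toEnd_f_eq_zero_s6
    (k := n + 1) (by simpa [LieModule.toEnd_module_end] using polarizationF_pow_eq_zero hA.2)
  have : ((m + k : ℕ) : ℂ) = n := by push_cast; linear_combination -hk
  have := Nat.cast_injective this
  omega

/-- For `0 ≤ n < m`, a bihomogeneous `A` of bidegree `(m, n)` with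
`δ(A) = 0` vanishes. -/
theorem statement6 (N : ℕ) (hN : 2 ≤ N) (m n : ℕ) (hnm : n < m)
    (A : S N) (hA : Bihom N m n A) (hdel : deltaOp N A = 0) :
    A = 0 :=
  statement6_general N m n hnm A hA hdel
end
end

section
/- Let d ≥ 1 and let P ∈ S be a polynomial in the X-variables only, homogeneous of degree d. Define maps α, β : S → S by α(A) := (∇P·Y)·A and β(A) := d·P·A − (∇P·Y)·δ(A). Then: (i) for every A ∈ S with δ(δ(A)) = 0 one has δ(β(A)) = 0; and (ii) for every A ∈ S with δ(A) = 0 one has β(α(A)) = 0. -/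
/-! δ is the derivation `∑ᵢ Xᵢ ∂/∂Yᵢ`. It kills `P`, which involves no `Y`, and also each
`∂P/∂Xᵢ`, since partial derivatives commute; hence `δ(∇P·Y) = ∑ᵢ Xᵢ ∂P/∂Xᵢ = d·P` by Euler's
identity. With these two values both claims are instances of the Leibniz rule:
`δ(β A) = d·P·δA - d·P·δA - (∇P·Y)·δ²A` and `β(α A) = (∇P·Y)·(d·P·A - δ(∇P·Y)·A - (∇P·Y)·δA)`. -/

open MvPolynomial

noncomputable section

namespace MvPolynomial

variable {R σ : Type*} [CommRing R] [DecidableEq σ]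

-- The commutator of two derivations is a derivation, and this one vanishes on every variable.
theorem pderiv_pderiv_comm (i j : σ) (f : MvPolynomial σ R) :
    pderiv i (pderiv j f) = pderiv j (pderiv i f) := by
  have hcomm : ⁅pderiv i, pderiv j⁆ = (0 : Derivation R (MvPolynomial σ R) (MvPolynomial σ R)) :=
    derivation_ext fun k => by
      rw [Derivation.commutator_apply, pderiv_X, pderiv_X]
      simp [Pi.single_apply, apply_ite]
  simpa [Derivation.commutator_apply, sub_eq_zero] using congr($hcomm f)

theorem pderiv_eq_zero_of_mem_supported {s : Set σ} {i : σ} (hi : i ∉ s) {f : MvPolynomial σ R}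
    (hf : f ∈ supported R s) : pderiv i f = 0 :=
  derivation_eqOn_supported (D₂ := 0)
    (fun k hk => by simp [pderiv_X, ne_of_mem_of_not_mem hk hi]) hf

end MvPolynomial

section Delta

variable (N : ℕ)

def deltaDerivation : Derivation ℂ (S N) (S N) :=
  ∑ i : Fin (N + 1), (X (Sum.inr i) : S N) • pderiv (Sum.inl i)

theorem deltaDerivation_apply (A : S N) : deltaDerivation N A = deltaOp N A := by
  rw [deltaDerivation, ← Derivation.coeFnAddMonoidHom_apply, map_sum, Finset.sum_apply]
  simp [deltaOp, Derivation.coeFnAddMonoidHom_apply]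

variable {N}

theorem deltaOp_mul (A B : S N) : deltaOp N (A * B) = deltaOp N A * B + A * deltaOp N B := by
  simp only [← deltaDerivation_apply, Derivation.leibniz, smul_eq_mul]
  ring

theorem deltaOp_sub (A B : S N) : deltaOp N (A - B) = deltaOp N A - deltaOp N B := by
  simp only [← deltaDerivation_apply, map_sub]

theorem deltaOp_natCast (n : ℕ) : deltaOp N n = 0 := by
  rw [← deltaDerivation_apply, Derivation.map_natCast]

theorem pderiv_inl_eq_zero_of_mem_supported {A : S N}
    (hA : A ∈ supported ℂ (Set.range (Sum.inr : Fin (N + 1) → Fin (N + 1) ⊕ Fin (N + 1))))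
    (i : Fin (N + 1)) : pderiv (Sum.inl i) A = 0 :=
  pderiv_eq_zero_of_mem_supported (by simp) hA

theorem deltaOp_eq_zero_of_mem_supported {A : S N}
    (hA : A ∈ supported ℂ (Set.range (Sum.inr : Fin (N + 1) → Fin (N + 1) ⊕ Fin (N + 1)))) :
    deltaOp N A = 0 := by
  simp [deltaOp, pderiv_inl_eq_zero_of_mem_supported hA]

theorem deltaOp_X_inl (i : Fin (N + 1)) : deltaOp N (X (Sum.inl i)) = X (Sum.inr i) := by
  simp [deltaOp, pderiv_X, Pi.single_apply]

theorem sum_X_inr_mul_pderiv_inr {d : ℕ} {P : S N} (hP : P.IsWeightedHomogeneous (wX N) d) :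
    ∑ i : Fin (N + 1), X (Sum.inr i) * pderiv (Sum.inr i) P = (d : S N) * P := by
  simpa [Fintype.sum_sum_type, wX, nsmul_eq_mul] using hP.sum_weight_X_mul_pderiv

theorem deltaOp_sum_X_inl_mul_pderiv_inr {P : S N}
    (hP : P ∈ supported ℂ (Set.range (Sum.inr : Fin (N + 1) → Fin (N + 1) ⊕ Fin (N + 1)))) :
    deltaOp N (∑ i : Fin (N + 1), X (Sum.inl i) * pderiv (Sum.inr i) P) =
      ∑ i : Fin (N + 1), X (Sum.inr i) * pderiv (Sum.inr i) P := by
  rw [← deltaDerivation_apply, map_sum]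
  refine Finset.sum_congr rfl fun i _ => ?_
  have hδ : deltaOp N (pderiv (Sum.inr i) P) = 0 := by
    simp [deltaOp, pderiv_pderiv_comm (Sum.inl _), pderiv_inl_eq_zero_of_mem_supported hP]
  rw [Derivation.leibniz, deltaDerivation_apply, deltaDerivation_apply, deltaOp_X_inl, hδ,
    smul_zero, zero_add, smul_eq_mul, mul_comm]

end Delta

theorem statement13_general (N : ℕ) (d : ℕ)
    (P : S N)
    (hPsupp : P ∈ MvPolynomial.supported ℂ
      (Set.range (Sum.inr : Fin (N + 1) → Fin (N + 1) ⊕ Fin (N + 1))))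
    (hPhom : P.IsWeightedHomogeneous (wX N) d)
    (gradPY : S N)
    (hgrad : gradPY = ∑ i : Fin (N + 1), X (Sum.inl i) * pderiv (Sum.inr i) P)
    (α β : S N → S N)
    (hα : ∀ A, α A = gradPY * A)
    (hβ : ∀ A, β A = (d : S N) * P * A - gradPY * deltaOp N A) :
    (∀ A : S N, deltaOp N (deltaOp N A) = 0 → deltaOp N (β A) = 0) ∧
      (∀ A : S N, deltaOp N A = 0 → β (α A) = 0) := by
  have hδP : deltaOp N P = 0 := deltaOp_eq_zero_of_mem_supported hPsupp
  have hδgrad : deltaOp N gradPY = d * P := by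
    rw [hgrad, deltaOp_sum_X_inl_mul_pderiv_inr hPsupp, sum_X_inr_mul_pderiv_inr hPhom]
  refine ⟨fun A hδδA => ?_, fun A hδA => ?_⟩
  · rw [hβ, deltaOp_sub, deltaOp_mul, deltaOp_mul, deltaOp_mul, deltaOp_natCast, hδP, hδgrad,
      hδδA]
    ring
  · rw [hα, hβ, deltaOp_mul, hδgrad, hδA]
    ring

/-- For `P` homogeneous of degree `d ≥ 1` in the `X`-variables only, with
`α(A) = (∇P·Y)·A` and `β(A) = d·P·A − (∇P·Y)·δ(A)`:
(i) `δ∘δ(A) = 0` implies `δ(β(A)) = 0`; (ii) `δ(A) = 0` implies `β(α(A)) = 0`. -/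
theorem statement13 (N : ℕ) (hN : 2 ≤ N) (d : ℕ) (hd : 1 ≤ d)
    (P : S N)
    (hPsupp : P ∈ MvPolynomial.supported ℂ
      (Set.range (Sum.inr : Fin (N + 1) → Fin (N + 1) ⊕ Fin (N + 1))))
    (hPhom : P.IsWeightedHomogeneous (wX N) d)
    (gradPY : S N)
    (hgrad : gradPY = ∑ i : Fin (N + 1), X (Sum.inl i) * pderiv (Sum.inr i) P)
    (α β : S N → S N)
    (hα : ∀ A, α A = gradPY * A)
    (hβ : ∀ A, β A = (d : S N) * P * A - gradPY * deltaOp N A) :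
    (∀ A : S N, deltaOp N (deltaOp N A) = 0 → deltaOp N (β A) = 0) ∧
      (∀ A : S N, deltaOp N A = 0 → β (α A) = 0) :=
  statement13_general N d P hPsupp hPhom gradPY hgrad α β hα hβ
end
end

section
/- Let u : S → S be the ℂ-linear map determined on monomials by u(Y^a·X^b) = (1/a!)·Y^a·X^b, where for a multi-exponent a = (a₀,…,a_N) one sets a! := a₀!⋯a_N!. Then for every A ∈ S: u( q·A + ∑_{i=0}^{N} Xᵢ·Yᵢ²·(∂A/∂Yᵢ) ) = q·u(A). -/
open MvPolynomial

noncomputable section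

/-! Since `q·A + ∑ᵢ XᵢYᵢ²·∂A/∂Yᵢ = ∑ᵢ XᵢYᵢ·(A + Yᵢ·∂A/∂Yᵢ)`, it suffices to treat one summand
on one monomial `Y^a·X^b`. There `A + Yᵢ·∂A/∂Yᵢ = (aᵢ + 1)·Y^a·X^b`, and multiplying by `XᵢYᵢ`
turns `aᵢ!` into `(aᵢ + 1)!`, so `u` divides out exactly the factor `aᵢ + 1`. -/

lemma MvPolynomial.X_mul_X_mul_monomial {R σ : Type*} [CommSemiring R] (a b : σ) (e : σ →₀ ℕ)
    (c : R) :
    X a * X b * monomial e c = monomial (e + Finsupp.single b 1 + Finsupp.single a 1) c := by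
  simp only [X, monomial_mul, one_mul]
  congr 1
  ac_rfl

section

variable {K ι : Type*} [Field K] [Fintype ι]

def yFactorial (e : ι ⊕ ι →₀ ℕ) : K := ∏ i, ((e (Sum.inl i)).factorial : K)

lemma yFactorial_add_single_inl [DecidableEq ι] (e : ι ⊕ ι →₀ ℕ) (i : ι) :
    (yFactorial (e + Finsupp.single (Sum.inl i) 1) : K) =
      (e (Sum.inl i) + 1) * yFactorial e := by
  have hterm : ∀ j, (((e + Finsupp.single (Sum.inl i) 1 : ι ⊕ ι →₀ ℕ) (Sum.inl j)).factorial : K) =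
      (if i = j then (e (Sum.inl i) + 1 : K) else 1) * (e (Sum.inl j)).factorial := by
    intro j
    rcases eq_or_ne i j with rfl | hij
    · simp [Nat.factorial_succ]
    · simp [hij]
  simp only [yFactorial, hterm, Finset.prod_mul_distrib, Finset.prod_ite_eq, Finset.mem_univ,
    if_true]

lemma yFactorial_add_single_inr (e : ι ⊕ ι →₀ ℕ) (i : ι) :
    (yFactorial (e + Finsupp.single (Sum.inr i) 1) : K) = yFactorial e := by
  simp [yFactorial]

variable {u : MvPolynomial (ι ⊕ ι) K →ₗ[K] MvPolynomial (ι ⊕ ι) K}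

lemma map_monomial_of_map_monomial_one
    (hu : ∀ e, u (monomial e 1) = monomial e (yFactorial e)⁻¹) (e : ι ⊕ ι →₀ ℕ) (c : K) :
    u (monomial e c) = monomial e (c / yFactorial e) := by
  have hsmul : monomial e c = c • monomial e (1 : K) := by
    rw [smul_monomial, smul_eq_mul, mul_one]
  rw [hsmul, map_smul, hu, smul_monomial, smul_eq_mul, div_eq_mul_inv]

lemma map_X_mul_X_mul_add_X_mul_pderiv_monomial [CharZero K]
    (hu : ∀ e, u (monomial e 1) = monomial e (yFactorial e)⁻¹) (i : ι) (e : ι ⊕ ι →₀ ℕ)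
    (c : K) :
    u (X (Sum.inr i) * X (Sum.inl i) *
        (monomial e c + X (Sum.inl i) * pderiv (Sum.inl i) (monomial e c))) =
      X (Sum.inr i) * X (Sum.inl i) * u (monomial e c) := by
  classical
  have heuler : monomial e c + X (Sum.inl i) * pderiv (Sum.inl i) (monomial e c) =
      monomial e (c * (e (Sum.inl i) + 1)) := by
    rw [X_mul_pderiv_monomial, nsmul_eq_mul, ← C_eq_coe_nat, C_mul_monomial, ← map_add]
    ring_nf
  rw [heuler, map_monomial_of_map_monomial_one hu, X_mul_X_mul_monomial, X_mul_X_mul_monomial,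
    map_monomial_of_map_monomial_one hu, yFactorial_add_single_inr, yFactorial_add_single_inl]
  have hsucc : (e (Sum.inl i) + 1 : K) ≠ 0 := Nat.cast_add_one_ne_zero _
  rw [mul_comm c, mul_div_mul_left _ _ hsucc]

lemma map_X_mul_X_mul_add_X_mul_pderiv [CharZero K]
    (hu : ∀ e, u (monomial e 1) = monomial e (yFactorial e)⁻¹) (i : ι)
    (A : MvPolynomial (ι ⊕ ι) K) :
    u (X (Sum.inr i) * X (Sum.inl i) * (A + X (Sum.inl i) * pderiv (Sum.inl i) A)) =
      X (Sum.inr i) * X (Sum.inl i) * u A := by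
  induction A using MvPolynomial.induction_on' with
  | monomial e c => exact map_X_mul_X_mul_add_X_mul_pderiv_monomial hu i e c
  | add p q hp hq =>
    rw [map_add, mul_add (X _), add_add_add_comm, mul_add, map_add, hp, hq, map_add, mul_add]

end

theorem statement14_general (N : ℕ)
    (u : S N →ₗ[ℂ] S N)
    (hu : ∀ e : (Fin (N + 1) ⊕ Fin (N + 1)) →₀ ℕ,
      u (monomial e 1) =
        monomial e ((∏ i : Fin (N + 1), (Nat.factorial (e (Sum.inl i)) : ℂ))⁻¹))
    (A : S N) :
    u (qPoly N * A +
        ∑ i : Fin (N + 1), X (Sum.inr i) * X (Sum.inl i) ^ 2 * pderiv (Sum.inl i) A) =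
      qPoly N * u A := by
  have hsplit : qPoly N * A +
      ∑ i : Fin (N + 1), X (Sum.inr i) * X (Sum.inl i) ^ 2 * pderiv (Sum.inl i) A =
      ∑ i, X (Sum.inr i) * X (Sum.inl i) * (A + X (Sum.inl i) * pderiv (Sum.inl i) A) := by
    rw [qPoly, Finset.sum_mul, ← Finset.sum_add_distrib]
    exact Finset.sum_congr rfl fun i _ => by ring
  rw [hsplit, map_sum, qPoly, Finset.sum_mul]
  exact Finset.sum_congr rfl fun i _ => map_X_mul_X_mul_add_X_mul_pderiv hu i A

/-- For the renormalization map `u(Y^a·X^b) = Y^a·X^b / a!`, one has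
`u(q·A + ∑ᵢ Xᵢ·Yᵢ²·∂A/∂Yᵢ) = q·u(A)` for all `A`. -/
theorem statement14 (N : ℕ) (hN : 2 ≤ N)
    (u : S N →ₗ[ℂ] S N)
    (hu : ∀ e : (Fin (N + 1) ⊕ Fin (N + 1)) →₀ ℕ,
      u (monomial e 1) =
        monomial e ((∏ i : Fin (N + 1), (Nat.factorial (e (Sum.inl i)) : ℂ))⁻¹))
    (A : S N) :
    u (qPoly N * A +
        ∑ i : Fin (N + 1), X (Sum.inr i) * X (Sum.inl i) ^ 2 * pderiv (Sum.inl i) A) =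
      qPoly N * u A :=
  statement14_general N u hu A
end
end

section
/- If a₀, a₁ ∈ R satisfy D(a₀) + (1 + F)·a₁ = 0, then there exists b ∈ R with a₁ = D(b). -/
/-!
`D` commutes with multiplication by `F`, since `F` involves no `Y`-variable, and it shifts the
`x`-degree by `d - 1`, so its range `M` is a graded subspace closed under multiplication by `F`.
Modulo `M`, `a₁ ≡ (-F)ᵏ a₁` for every `k` (geometric series), and for `k > m` the right side has
no component of `x`-degree `m`; hence every homogeneous component of `a₁` lies in `M`.
-/

open MvPolynomial

namespace MvPolynomial

section Weighted

variable {σ R : Type*} {w : σ → ℕ}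

theorem IsWeightedHomogeneous.weightedHomogeneousComponent_mul_of_lt [CommSemiring R]
    {A : MvPolynomial σ R} {n m : ℕ} (hA : A.IsWeightedHomogeneous w n) (hmn : m < n)
    (B : MvPolynomial σ R) : weightedHomogeneousComponent w m (A * B) = 0 := by
  classical
  refine weightedHomogeneousComponent_eq_zero' _ _ fun e he => ?_
  rw [mem_support_iff, coeff_mul] at he
  obtain ⟨x, hx, hne⟩ := Finset.exists_ne_zero_of_sum_ne_zero he
  rw [← Finset.HasAntidiagonal.mem_antidiagonal.mp hx, map_add, hA (left_ne_zero_of_mul hne)]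
  omega

attribute [local instance] weightedDecomposition

theorem _root_.Submodule.IsHomogeneous.weightedHomogeneousComponent_mem [CommSemiring R]
    {M : Submodule R (MvPolynomial σ R)} (hM : M.IsHomogeneous (weightedHomogeneousSubmodule R w))
    {a : MvPolynomial σ R} (ha : a ∈ M) (m : ℕ) : weightedHomogeneousComponent w m a ∈ M := by
  rw [← weightedDecomposition.decompose'_apply]
  exact hM m ha

theorem _root_.Submodule.isHomogeneous_of_forall_weightedHomogeneousComponent_mem
    [CommSemiring R] {M : Submodule R (MvPolynomial σ R)}
    (hM : ∀ a ∈ M, ∀ m, weightedHomogeneousComponent w m a ∈ M) :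
    M.IsHomogeneous (weightedHomogeneousSubmodule R w) := by
  intro m a ha
  have := hM a ha m
  rw [← weightedDecomposition.decompose'_apply] at this
  exact this

theorem _root_.Submodule.IsHomogeneous.mem_of_forall_weightedHomogeneousComponent_mem
    [CommSemiring R]
    {M : Submodule R (MvPolynomial σ R)} (hM : M.IsHomogeneous (weightedHomogeneousSubmodule R w))
    {a : MvPolynomial σ R} (ha : ∀ m, weightedHomogeneousComponent w m a ∈ M) : a ∈ M := by
  refine hM.mem_iff.mpr fun m => ?_
  have := ha m
  rw [← weightedDecomposition.decompose'_apply] at this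
  exact this

theorem _root_.Submodule.IsHomogeneous.mem_of_one_add_mul_mem [CommRing R]
    {M : Submodule R (MvPolynomial σ R)} (hM : M.IsHomogeneous (weightedHomogeneousSubmodule R w))
    {F : MvPolynomial σ R} {d : ℕ} (hd : 1 ≤ d) (hF : F.IsWeightedHomogeneous w d)
    (hFM : ∀ a ∈ M, F * a ∈ M)
    {a : MvPolynomial σ R} (ha : (1 + F) * a ∈ M) : a ∈ M := by
  have hpow : ∀ k, ∀ b ∈ M, (-F) ^ k * b ∈ M := by
    intro k
    induction k with
    | zero => simp
    | succ k ih =>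
      intro b hb
      rw [pow_succ', mul_assoc, neg_mul]
      exact M.neg_mem (hFM _ (ih b hb))
  refine hM.mem_of_forall_weightedHomogeneousComponent_mem fun m => ?_
  have htrunc : a - (-F) ^ (m + 1) * a ∈ M := by
    have := mul_neg_geom_sum (-F) (m + 1)
    rw [sub_neg_eq_add] at this
    rw [← one_sub_mul, ← this, mul_comm (1 + F), mul_assoc, Finset.sum_mul]
    exact M.sum_mem fun k _ => hpow k _ ha
  have hcomp := hM.weightedHomogeneousComponent_mem htrunc m
  have hlt : m < (m + 1) • d := by rw [smul_eq_mul]; nlinarith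
  rwa [map_sub, (hF.neg.pow (m + 1)).weightedHomogeneousComponent_mul_of_lt hlt, sub_zero]
    at hcomp

theorem _root_.LinearMap.range_isHomogeneous_of_isWeightedHomogeneous_map [CommSemiring R]
    (f : MvPolynomial σ R →ₗ[R] MvPolynomial σ R) (s : ℕ)
    (hf : ∀ n A, A.IsWeightedHomogeneous w n → (f A).IsWeightedHomogeneous w (n + s)) :
    (LinearMap.range f).IsHomogeneous (weightedHomogeneousSubmodule R w) := by
  classical
  refine Submodule.isHomogeneous_of_forall_weightedHomogeneousComponent_mem ?_
  rintro _ ⟨g, rfl⟩ m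
  rw [← sum_weightedHomogeneousComponent (w := w) g,
    finsum_eq_sum _ (weightedHomogeneousComponent_finsupp g), map_sum, map_sum]
  refine Submodule.sum_mem _ fun n _ => ?_
  have hn := hf n _ (weightedHomogeneousComponent_isWeightedHomogeneous n g)
  by_cases hm : n + s = m
  · rw [← hm, hn.weightedHomogeneousComponent_same]
    exact LinearMap.mem_range_self f _
  · rw [hn.weightedHomogeneousComponent_ne m (Ne.symm hm)]
    exact Submodule.zero_mem _

end Weighted

section CrossDerivation

variable {ι R : Type*} [CommSemiring R]

theorem pderiv_inr_eq_zero_of_mem_supported {G : MvPolynomial (ι ⊕ ι) R}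
    (hG : G ∈ supported R (Set.range Sum.inl)) (i : ι) : pderiv (Sum.inr i) G = 0 := by
  refine pderiv_eq_zero_of_notMem_vars fun hi => ?_
  simpa using mem_supported.mp hG hi

variable [Fintype ι]

noncomputable def crossDerivation (F : MvPolynomial (ι ⊕ ι) R) :
    MvPolynomial (ι ⊕ ι) R →ₗ[R] MvPolynomial (ι ⊕ ι) R :=
  ∑ i, LinearMap.mulLeft R (pderiv (Sum.inl i) F) ∘ₗ (pderiv (Sum.inr i)).toLinearMap

theorem crossDerivation_apply (F A : MvPolynomial (ι ⊕ ι) R) :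
    crossDerivation F A = ∑ i, pderiv (Sum.inl i) F * pderiv (Sum.inr i) A := by
  simp [crossDerivation, LinearMap.sum_apply]

theorem crossDerivation_mul_of_mem_supported (F : MvPolynomial (ι ⊕ ι) R)
    {G : MvPolynomial (ι ⊕ ι) R} (hG : G ∈ supported R (Set.range Sum.inl))
    (A : MvPolynomial (ι ⊕ ι) R) : crossDerivation F (G * A) = G * crossDerivation F A := by
  simp only [crossDerivation_apply, Finset.mul_sum, Derivation.leibniz,
    pderiv_inr_eq_zero_of_mem_supported hG, smul_eq_mul, mul_zero, add_zero]
  exact Finset.sum_congr rfl fun i _ => by ring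

theorem IsWeightedHomogeneous.crossDerivation {F : MvPolynomial (ι ⊕ ι) R} {d : ℕ} (hd : 1 ≤ d)
    (hF : F.IsWeightedHomogeneous (Sum.elim (fun _ => 1) (fun _ => 0)) d)
    {A : MvPolynomial (ι ⊕ ι) R} {n : ℕ}
    (hA : A.IsWeightedHomogeneous (Sum.elim (fun _ => 1) (fun _ => 0)) n) :
    (crossDerivation F A).IsWeightedHomogeneous (Sum.elim (fun _ => 1) (fun _ => 0))
      (n + (d - 1)) := by
  rw [crossDerivation_apply]
  refine IsWeightedHomogeneous.sum _ _ _ fun i _ => ?_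
  rw [add_comm]
  exact (hF.pderiv (by simp; omega)).mul (hA.pderiv (by simp))

end CrossDerivation

end MvPolynomial

theorem statement15_general (p : ℕ) (d : ℕ) (hd : 1 ≤ d)
    (F : MvPolynomial (Fin p ⊕ Fin p) ℂ)
    (hFsupp : F ∈ MvPolynomial.supported ℂ
      (Set.range (Sum.inl : Fin p → Fin p ⊕ Fin p)))
    (hFhom : F.IsWeightedHomogeneous (Sum.elim (fun _ => 1) (fun _ => 0) : Fin p ⊕ Fin p → ℕ) d)
    (a₀ a₁ : MvPolynomial (Fin p ⊕ Fin p) ℂ)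
    (h : (∑ i : Fin p, pderiv (Sum.inl i) F * pderiv (Sum.inr i) a₀) + (1 + F) * a₁ = 0) :
    ∃ b : MvPolynomial (Fin p ⊕ Fin p) ℂ,
      a₁ = ∑ i : Fin p, pderiv (Sum.inl i) F * pderiv (Sum.inr i) b := by
  have hrange : (1 + F) * a₁ ∈ LinearMap.range (crossDerivation F) :=
    ⟨-a₀, by rw [map_neg, crossDerivation_apply, neg_eq_iff_add_eq_zero, h]⟩
  have hhom := (crossDerivation F).range_isHomogeneous_of_isWeightedHomogeneous_map _
    fun _ _ hA => hFhom.crossDerivation hd hA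
  obtain ⟨b, hb⟩ := hhom.mem_of_one_add_mul_mem hd hFhom
    (fun _ ⟨c, hc⟩ => ⟨F * c, by rw [crossDerivation_mul_of_mem_supported F hFsupp, hc]⟩) hrange
  exact ⟨b, by rw [← hb, crossDerivation_apply]⟩

/-- Work in `R = ℂ[x₁,…,x_p, Y₁,…,Y_p]` (left copy: `x`-variables, right
copy: `Y`-variables), with `F` in the `x`-variables only, homogeneous of degree `d ≥ 1`, and
`D(A) = ∑ᵢ (∂F/∂xᵢ)·(∂A/∂Yᵢ)`. If `D(a₀) + (1 + F)·a₁ = 0`, then `a₁ = D(b)` for some `b`. -/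
theorem statement15 (p : ℕ) (hp : 1 ≤ p) (d : ℕ) (hd : 1 ≤ d)
    (F : MvPolynomial (Fin p ⊕ Fin p) ℂ)
    (hFsupp : F ∈ MvPolynomial.supported ℂ
      (Set.range (Sum.inl : Fin p → Fin p ⊕ Fin p)))
    (hFhom : F.IsWeightedHomogeneous (Sum.elim (fun _ => 1) (fun _ => 0) : Fin p ⊕ Fin p → ℕ) d)
    (a₀ a₁ : MvPolynomial (Fin p ⊕ Fin p) ℂ)
    (h : (∑ i : Fin p, pderiv (Sum.inl i) F * pderiv (Sum.inr i) a₀) + (1 + F) * a₁ = 0) :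
    ∃ b : MvPolynomial (Fin p ⊕ Fin p) ℂ,
      a₁ = ∑ i : Fin p, pderiv (Sum.inl i) F * pderiv (Sum.inr i) b :=
  statement15_general p d hd F hFsupp hFhom a₀ a₁ h
end

section
/- Let k ≥ 1, m ≥ 1, and let A₁,…,A_k ∈ ℂ[z₁,…,z_k] satisfy, for every 1 ≤ j ≤ k: 2·∂/∂zⱼ( ∑_{i=1}^{k} zᵢ·Aᵢ ) = m·Aⱼ. Then: if m is odd, Aⱼ = 0 for all j; and if m is even, there exists Q ∈ ℂ[z₁,…,z_k] homogeneous of degree m/2 such that Aⱼ = ∂Q/∂zⱼ for all j. -/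
/-!
With `P = ∑ zᵢ Aᵢ` the hypothesis says `Aⱼ = ∂ⱼ Q` for `Q = (2/m) P`, hence
`∑ zⱼ ∂ⱼ Q = ∑ zⱼ Aⱼ = (m/2) Q`. The Euler operator `∑ zⱼ ∂ⱼ` multiplies the coefficient of `z^s`
by `|s|`, so every monomial of `Q` has degree `m/2`: `Q` vanishes when `m` is odd and is
homogeneous of degree `m/2` when `m` is even.
-/

open MvPolynomial

namespace MvPolynomial

variable {R σ : Type*} [Fintype σ]

theorem coeff_sum_X_mul_pderiv [CommSemiring R] (φ : MvPolynomial σ R) (s : σ →₀ ℕ) :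
    coeff s (∑ i, X i * pderiv i φ) = s.degree • coeff s φ := by
  classical
  induction φ using MvPolynomial.induction_on' with
  | monomial t a =>
    simp only [X_mul_pderiv_monomial, ← Finset.sum_smul, coeff_smul, coeff_monomial]
    split_ifs with h
    · rw [← h, Finsupp.degree_eq_sum]
    · simp
  | add p q hp hq =>
    simp only [map_add, mul_add, Finset.sum_add_distrib, coeff_add, hp, hq, smul_add]

variable [CommRing R] [IsDomain R]

theorem degree_eq_of_sum_X_mul_pderiv_eq_smul {φ : MvPolynomial σ R} {c : R}
    (h : ∑ i, X i * pderiv i φ = c • φ) {s : σ →₀ ℕ} (hs : s ∈ φ.support) :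
    (s.degree : R) = c := by
  have := congrArg (coeff s) h
  rw [coeff_sum_X_mul_pderiv, coeff_smul, nsmul_eq_mul, smul_eq_mul] at this
  exact mul_right_cancel₀ (mem_support_iff.mp hs) this

theorem isHomogeneous_of_sum_X_mul_pderiv_eq_smul [CharZero R] {φ : MvPolynomial σ R} {n : ℕ}
    (h : ∑ i, X i * pderiv i φ = (n : R) • φ) : φ.IsHomogeneous n := fun s hs => by
  rw [Pi.one_def, ← Finsupp.degree_eq_weight_one (R := ℕ)]
  exact_mod_cast degree_eq_of_sum_X_mul_pderiv_eq_smul h (mem_support_iff.mpr hs)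

theorem eq_zero_of_sum_X_mul_pderiv_eq_smul {φ : MvPolynomial σ R} {c : R}
    (h : ∑ i, X i * pderiv i φ = c • φ) (hc : ∀ n : ℕ, (n : R) ≠ c) : φ = 0 :=
  support_eq_empty.mp <| Finset.eq_empty_of_forall_notMem fun _ hs =>
    hc _ (degree_eq_of_sum_X_mul_pderiv_eq_smul h hs)

end MvPolynomial

theorem statement16_general (k : ℕ) (m : ℕ) (hm : 1 ≤ m)
    (A : Fin k → MvPolynomial (Fin k) ℂ)
    (hA : ∀ j : Fin k,
      2 * pderiv j (∑ i : Fin k, X i * A i) = (m : MvPolynomial (Fin k) ℂ) * A j) :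
    (Odd m → ∀ j, A j = 0) ∧
      (Even m → ∃ Q : MvPolynomial (Fin k) ℂ,
        Q.IsHomogeneous (m / 2) ∧ ∀ j, A j = pderiv j Q) := by
  have hm0 : (m : ℂ) ≠ 0 := Nat.cast_ne_zero.mpr (by omega)
  set Q := (2 / m : ℂ) • ∑ i, X i * A i
  have hgrad : ∀ j, A j = pderiv j Q := fun j => by
    have hinv : C (m : ℂ)⁻¹ * (m : MvPolynomial (Fin k) ℂ) = 1 := by
      rw [← map_natCast C m, ← map_mul, inv_mul_cancel₀ hm0, map_one]
    rw [(pderiv j).map_smul, smul_eq_C_mul, div_eq_mul_inv, map_mul, map_ofNat]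
    linear_combination (-C (m : ℂ)⁻¹) * hA j - A j * hinv
  have hEuler : ∑ i, X i * pderiv i Q = (m / 2 : ℂ) • Q := by
    simp_rw [← hgrad, Q, smul_smul]
    field_simp
    rw [one_smul]
  refine ⟨fun hodd j => ?_, fun ⟨r, hr⟩ => ⟨Q, ?_, hgrad⟩⟩
  · have hQ : Q = 0 := eq_zero_of_sum_X_mul_pderiv_eq_smul hEuler fun n hn => by
      have hnm : 2 * n = m := by exact_mod_cast (show (2 * n : ℂ) = m by rw [hn]; field_simp)
      exact Nat.not_even_iff_odd.mpr hodd ⟨n, by omega⟩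
    rw [hgrad j, hQ, map_zero]
  · refine isHomogeneous_of_sum_X_mul_pderiv_eq_smul ?_
    rw [show m / 2 = r by omega]
    convert hEuler using 2
    rw [hr]; push_cast; ring

/-- In `ℂ[z₁,…,z_k]`, if `A₁,…,A_k` satisfy
`2·∂/∂zⱼ(∑ᵢ zᵢ·Aᵢ) = m·Aⱼ` for all `j`, then for `m` odd all `Aⱼ` vanish, and for `m` even
there is `Q` homogeneous of degree `m/2` with `Aⱼ = ∂Q/∂zⱼ` for all `j`. -/
theorem statement16 (k : ℕ) (hk : 1 ≤ k) (m : ℕ) (hm : 1 ≤ m)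
    (A : Fin k → MvPolynomial (Fin k) ℂ)
    (hA : ∀ j : Fin k,
      2 * pderiv j (∑ i : Fin k, X i * A i) = (m : MvPolynomial (Fin k) ℂ) * A j) :
    (Odd m → ∀ j, A j = 0) ∧
      (Even m → ∃ Q : MvPolynomial (Fin k) ℂ,
        Q.IsHomogeneous (m / 2) ∧ ∀ j, A j = pderiv j Q) :=
  statement16_general k m hm A hA
end

section
/- Let m ≥ 2 and k ≥ 1. Let q₁,…,q_k ∈ S be polynomials in the Y-variables only, homogeneous of degree 2, and let A₁,…,A_k ∈ S be polynomials in the Y-variables only, homogeneous of degree m−2. Then the following are equivalent: (a) there exists B ∈ S in the Y-variables only, homogeneous of degree m, with δ(B) = ∑_{i=1}^{k} δ(qᵢ)·Aᵢ; (b) for every 0 ≤ j ≤ N: 2·∂/∂Yⱼ( ∑_{i=1}^{k} qᵢ·Aᵢ ) = m·∑_{i=1}^{k} Aᵢ·(∂qᵢ/∂Yⱼ). -/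
open MvPolynomial

noncomputable section

/-
For `Y`-only polynomials, `∂/∂Xⱼ ∘ δ = ∂/∂Yⱼ`, so `δB = ∑ δ(qᵢ)·Aᵢ` holds exactly
when `∂B/∂Yⱼ = ∑ Aᵢ·∂qᵢ/∂Yⱼ` for all `j`. Given such a `B` of degree `m`, Euler's identity
turns these equations into `m·B = 2·∑ qᵢAᵢ`, and differentiating gives (b). Conversely, under
(b) the polynomial `B = (2/m)·∑ qᵢAᵢ` satisfies the equations.
-/

section Supported

variable {R σ : Type*} [CommSemiring R] {s : Set σ} {p : MvPolynomial σ R}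

lemma pderiv_mem_supported (hp : p ∈ supported R s) (i : σ) : pderiv i p ∈ supported R s := by
  rw [supported] at hp ⊢
  induction hp using Algebra.adjoin_induction with
  | mem x hx =>
    obtain ⟨j, -, rfl⟩ := hx
    by_cases h : j = i
    · rw [h, pderiv_X_self]; exact one_mem _
    · rw [pderiv_X_of_ne h]; exact zero_mem _
  | algebraMap r => rw [MvPolynomial.algebraMap_eq, pderiv_C]; exact zero_mem _
  | add x y _ _ hx hy => rw [map_add]; exact add_mem hx hy
  | mul x y hx' hy' hx hy => rw [pderiv_mul]; exact add_mem (mul_mem hx hy') (mul_mem hx' hy)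

lemma pderiv_eq_zero_of_mem_supported (hp : p ∈ supported R s) {i : σ} (hi : i ∉ s) :
    pderiv i p = 0 :=
  pderiv_eq_zero_of_notMem_vars fun h => hi (mem_supported.mp hp h)

end Supported

abbrev supportedY (N : ℕ) : Subalgebra ℂ (S N) :=
  supported ℂ (Set.range (Sum.inl : Fin (N + 1) → Fin (N + 1) ⊕ Fin (N + 1)))

section DeltaOp

variable {N : ℕ}

lemma pderiv_inr_eq_zero {p : S N} (hp : p ∈ supportedY N) (j : Fin (N + 1)) :
    pderiv (Sum.inr j) p = 0 :=
  pderiv_eq_zero_of_mem_supported hp fun ⟨_, h⟩ => Sum.inl_ne_inr h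

lemma pderiv_inr_deltaOp {p : S N} (hp : p ∈ supportedY N) (j : Fin (N + 1)) :
    pderiv (Sum.inr j) (deltaOp N p) = pderiv (Sum.inl j) p := by
  have hX : ∀ i, pderiv (Sum.inr j) (X (Sum.inr i) * pderiv (Sum.inl i) p) =
      pderiv (Sum.inr j) (X (Sum.inr i)) * pderiv (Sum.inl i) p := fun i => by
    rw [pderiv_mul, pderiv_inr_eq_zero (pderiv_mem_supported hp _), mul_zero, add_zero]
  rw [deltaOp, map_sum, Finset.sum_eq_single j]
  · rw [hX, pderiv_X_self, one_mul]
  · intro i _ hij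
    rw [hX, pderiv_X_of_ne (Sum.inr_injective.ne hij), zero_mul]
  · simp

lemma sum_X_inl_mul_pderiv_inl {n : ℕ} {p : S N} (hp : p.IsWeightedHomogeneous (wY N) n) :
    ∑ j : Fin (N + 1), X (Sum.inl j) * pderiv (Sum.inl j) p = n • p := by
  simpa [Fintype.sum_sum_type, wY] using hp.sum_weight_X_mul_pderiv

variable {ι : Type*} [Fintype ι]

lemma deltaOp_eq_sum_iff {B : S N} {Q A : ι → S N} (hB : B ∈ supportedY N)
    (hQ : ∀ i, Q i ∈ supportedY N) (hA : ∀ i, A i ∈ supportedY N) :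
    deltaOp N B = ∑ i, deltaOp N (Q i) * A i ↔
      ∀ j, pderiv (Sum.inl j) B = ∑ i, A i * pderiv (Sum.inl j) (Q i) := by
  constructor
  · intro h j
    have h' := congrArg (pderiv (Sum.inr j)) h
    rw [pderiv_inr_deltaOp hB, map_sum] at h'
    rw [h']
    refine Finset.sum_congr rfl fun i _ => ?_
    rw [pderiv_mul, pderiv_inr_deltaOp (hQ i), pderiv_inr_eq_zero (hA i), mul_zero, add_zero,
      mul_comm]
  · intro h
    simp only [deltaOp, h, Finset.mul_sum, Finset.sum_mul]
    rw [Finset.sum_comm]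
    exact Finset.sum_congr rfl fun i _ => Finset.sum_congr rfl fun j _ => by ring

lemma nsmul_eq_of_pderiv_inl_eq_sum {m d : ℕ} {B : S N} {Q A : ι → S N}
    (hB : B.IsWeightedHomogeneous (wY N) m) (hQ : ∀ i, (Q i).IsWeightedHomogeneous (wY N) d)
    (h : ∀ j, pderiv (Sum.inl j) B = ∑ i, A i * pderiv (Sum.inl j) (Q i)) :
    m • B = d • ∑ i, Q i * A i := by
  calc m • B = ∑ j, X (Sum.inl j) * pderiv (Sum.inl j) B := (sum_X_inl_mul_pderiv_inl hB).symm
    _ = ∑ i, (∑ j, X (Sum.inl j) * pderiv (Sum.inl j) (Q i)) * A i := by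
      simp only [h, Finset.mul_sum, Finset.sum_mul]
      rw [Finset.sum_comm]
      exact Finset.sum_congr rfl fun i _ => Finset.sum_congr rfl fun j _ => by ring
    _ = d • ∑ i, Q i * A i := by
      simp only [sum_X_inl_mul_pderiv_inl (hQ _), smul_mul_assoc, Finset.smul_sum]

end DeltaOp

theorem statement17_general (N : ℕ) (m k : ℕ) (hm : 2 ≤ m)
    (Q A : Fin k → S N)
    (hQsupp : ∀ i, Q i ∈ MvPolynomial.supported ℂ
      (Set.range (Sum.inl : Fin (N + 1) → Fin (N + 1) ⊕ Fin (N + 1))))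
    (hQhom : ∀ i, (Q i).IsWeightedHomogeneous (wY N) 2)
    (hAsupp : ∀ i, A i ∈ MvPolynomial.supported ℂ
      (Set.range (Sum.inl : Fin (N + 1) → Fin (N + 1) ⊕ Fin (N + 1))))
    (hAhom : ∀ i, (A i).IsWeightedHomogeneous (wY N) (m - 2)) :
    (∃ B : S N, B ∈ MvPolynomial.supported ℂ
        (Set.range (Sum.inl : Fin (N + 1) → Fin (N + 1) ⊕ Fin (N + 1))) ∧
        B.IsWeightedHomogeneous (wY N) m ∧
        deltaOp N B = ∑ i : Fin k, deltaOp N (Q i) * A i) ↔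
      ∀ j : Fin (N + 1),
        2 * pderiv (Sum.inl j) (∑ i : Fin k, Q i * A i) =
          (m : S N) * ∑ i : Fin k, A i * pderiv (Sum.inl j) (Q i) := by
  set P := ∑ i, Q i * A i
  constructor
  · rintro ⟨B, hBsupp, hBhom, hB⟩ j
    have hD := (deltaOp_eq_sum_iff hBsupp hQsupp hAsupp).1 hB
    have hE := congrArg (pderiv (Sum.inl j)) (nsmul_eq_of_pderiv_inl_eq_sum hBhom hQhom hD)
    rw [map_nsmul, map_nsmul, hD j, nsmul_eq_mul, nsmul_eq_mul, Nat.cast_ofNat] at hE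
    exact hE.symm
  · intro hb
    have hm0 : (m : ℂ) ≠ 0 := Nat.cast_ne_zero.mpr (by omega)
    have hPhom : P.IsWeightedHomogeneous (wY N) m :=
      IsWeightedHomogeneous.sum _ _ _ fun i _ => by
        simpa [show 2 + (m - 2) = m by omega] using (hQhom i).mul (hAhom i)
    have hBsupp : C ((2 : ℂ) / m) * P ∈ supportedY N :=
      mul_mem (algebraMap_mem _ _) (Subalgebra.sum_mem _ fun i _ => mul_mem (hQsupp i) (hAsupp i))
    refine ⟨C ((2 : ℂ) / m) * P, hBsupp, hPhom.C_mul _,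
      (deltaOp_eq_sum_iff hBsupp hQsupp hAsupp).2 fun j => ?_⟩
    calc pderiv (Sum.inl j) (C ((2 : ℂ) / m) * P)
        = C (m : ℂ)⁻¹ * (2 * pderiv (Sum.inl j) P) := by
          rw [pderiv_C_mul, ← mul_assoc, ← map_ofNat C 2, ← map_mul, div_eq_inv_mul]
      _ = ∑ i, A i * pderiv (Sum.inl j) (Q i) := by
          rw [hb j, ← mul_assoc, ← map_natCast C m, ← map_mul, inv_mul_cancel₀ hm0, map_one,
            one_mul]

/-- For quadratic `q₁,…,q_k` and degree-`(m−2)` polynomials `A₁,…,A_k`, all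
in the `Y`-variables only: there exists `B` in the `Y`-variables only, homogeneous of degree
`m`, with `δ(B) = ∑ᵢ δ(qᵢ)·Aᵢ`, iff
`2·∂/∂Yⱼ(∑ᵢ qᵢ·Aᵢ) = m·∑ᵢ Aᵢ·∂qᵢ/∂Yⱼ` for every `j`. -/
theorem statement17 (N : ℕ) (hN : 2 ≤ N) (m k : ℕ) (hm : 2 ≤ m) (hk : 1 ≤ k)
    (Q A : Fin k → S N)
    (hQsupp : ∀ i, Q i ∈ MvPolynomial.supported ℂ
      (Set.range (Sum.inl : Fin (N + 1) → Fin (N + 1) ⊕ Fin (N + 1))))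
    (hQhom : ∀ i, (Q i).IsWeightedHomogeneous (wY N) 2)
    (hAsupp : ∀ i, A i ∈ MvPolynomial.supported ℂ
      (Set.range (Sum.inl : Fin (N + 1) → Fin (N + 1) ⊕ Fin (N + 1))))
    (hAhom : ∀ i, (A i).IsWeightedHomogeneous (wY N) (m - 2)) :
    (∃ B : S N, B ∈ MvPolynomial.supported ℂ
        (Set.range (Sum.inl : Fin (N + 1) → Fin (N + 1) ⊕ Fin (N + 1))) ∧
        B.IsWeightedHomogeneous (wY N) m ∧
        deltaOp N B = ∑ i : Fin k, deltaOp N (Q i) * A i) ↔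
      ∀ j : Fin (N + 1),
        2 * pderiv (Sum.inl j) (∑ i : Fin k, Q i * A i) =
          (m : S N) * ∑ i : Fin k, A i * pderiv (Sum.inl j) (Q i) :=
  statement17_general N m k hm Q A hQsupp hQhom hAsupp hAhom
end
end
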